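/- arXiv:2011.01053 — 3 statements merged into one kernel-verified Lean document; each statement's English description precedes it below -/
import Mathlib

section
/- Let d, m and a_1,…,a_d be positive integers, and suppose that every (a_1,…,a_d)-fractionally balanced d-partite hypergraph contains a matching of size m. Then there exists a positive integer N such that every (a_1,…,a_d,N)-fractionally balanced (d+1)-partite hypergraph contains a matching of size m. -/
/-- The degree of vertex `v` (on side `t`) with respect to a weight function `f`
on a `d`-partite hypergraph with sides `Fin (a t)`. -/
def degree {d : ℕ} {a : Fin d → ℕ} (f : (∀ t, Fin (a t)) → ℝ)
    (t : Fin d) (v : Fin (a t)) : ℝ :=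
  ∑ e : ∀ t, Fin (a t), if e t = v then f e else 0

/-- `f` is a balanced weight function on the hypergraph `H`. -/
def IsBalanced {d : ℕ} {a : Fin d → ℕ} (H : Finset (∀ t, Fin (a t)))
    (f : (∀ t, Fin (a t)) → ℝ) : Prop :=
  (∀ e, 0 ≤ f e) ∧ (∀ e, e ∉ H → f e = 0) ∧
    ∀ t : Fin d, ∀ v w : Fin (a t), degree f t v = degree f t w

/-- `H` is `(a 0, …, a (d-1))`-fractionally balanced. -/
def FracBalanced {d : ℕ} {a : Fin d → ℕ} (H : Finset (∀ t, Fin (a t))) : Prop :=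
  ∃ f, IsBalanced H f ∧ f ≠ 0

/-- `M` is a matching in `H`. -/
def IsMatching {d : ℕ} {a : Fin d → ℕ} (H M : Finset (∀ t, Fin (a t))) : Prop :=
  M ⊆ H ∧ ∀ e ∈ M, ∀ f ∈ M, e ≠ f → ∀ t, e t ≠ f t

/-!
By Carathéodory's theorem, applied to the incidence vectors of the edges, a fractionally balanced
hypergraph contains a fractionally balanced subhypergraph `H₀` with at most one edge more than it
has vertices. In the `(a₁, …, a_d, N)`-partite case every vertex of the last side lies in an edge
of `H₀`, so all but at most `∑ aₜ + 1` of these vertices lie in exactly one edge of `H₀`; call them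
light. Summing a balanced weight on `H₀` over the light vertices gives a weight on `d`-partite
edges that differs from the balanced full marginal by a fraction `O(1/N)` of its mass. By
compactness, the weights supported on any of the finitely many `d`-partite hypergraphs that are not
fractionally balanced stay boundedly far from balance, so for `N` large the support of the light
marginal is fractionally balanced and has a matching of size `m`. Attaching to each of its edges a
light vertex with which it forms an edge of `H₀` gives a matching of `H₀`, since a light vertex
lies in only one edge.
-/

open Finset

section Degree

variable {n : ℕ} {b : Fin n → ℕ}

lemma degree_eq_sum_filter (f : (∀ t, Fin (b t)) → ℝ) (t : Fin n) (v : Fin (b t)) :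
    degree f t v = ∑ e with e t = v, f e := by
  rw [degree, sum_filter]

lemma degree_add (f g : (∀ t, Fin (b t)) → ℝ) (t : Fin n) (v : Fin (b t)) :
    degree (f + g) t v = degree f t v + degree g t v := by
  simp only [degree_eq_sum_filter, Pi.add_apply, sum_add_distrib]

lemma degree_smul (c : ℝ) (f : (∀ t, Fin (b t)) → ℝ) (t : Fin n) (v : Fin (b t)) :
    degree (c • f) t v = c * degree f t v := by
  simp only [degree_eq_sum_filter, Pi.smul_apply, smul_eq_mul, mul_sum]

lemma sum_degree (f : (∀ t, Fin (b t)) → ℝ) (t : Fin n) :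
    ∑ v, degree f t v = ∑ e, f e := by
  simp only [degree, sum_comm (γ := Fin (b t)), sum_ite_eq, mem_univ, if_true]

lemma degree_nonneg {f : (∀ t, Fin (b t)) → ℝ} (hf : ∀ e, 0 ≤ f e) (t : Fin n) (v : Fin (b t)) :
    0 ≤ degree f t v := by
  rw [degree_eq_sum_filter]
  exact sum_nonneg fun e _ => hf e

lemma degree_le_sum {f : (∀ t, Fin (b t)) → ℝ} (hf : ∀ e, 0 ≤ f e) (t : Fin n) (v : Fin (b t)) :
    degree f t v ≤ ∑ e, f e := by
  rw [degree_eq_sum_filter]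
  exact sum_le_sum_of_subset_of_nonneg (filter_subset _ _) fun e _ _ => hf e

lemma card_mul_degree_eq_sum {f : (∀ t, Fin (b t)) → ℝ} {t : Fin n}
    (hf : ∀ v w : Fin (b t), degree f t v = degree f t w) (v : Fin (b t)) :
    (b t : ℝ) * degree f t v = ∑ e, f e := by
  rw [← sum_degree f t, sum_congr rfl fun w _ => hf w v]
  simp

lemma IsBalanced.sum_pos {H : Finset (∀ t, Fin (b t))} {f : (∀ t, Fin (b t)) → ℝ}
    (hf : IsBalanced H f) (hf0 : f ≠ 0) : 0 < ∑ e, f e :=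
  Fintype.sum_pos ((Pi.le_def.2 hf.1).lt_of_ne' hf0)

lemma IsBalanced.exists_mem_apply_eq {H : Finset (∀ t, Fin (b t))} {f : (∀ t, Fin (b t)) → ℝ}
    (hf : IsBalanced H f) (hf0 : f ≠ 0) (t : Fin n) (v : Fin (b t)) : ∃ e ∈ H, e t = v := by
  have hdeg : degree f t v ≠ 0 := by
    intro h
    have := card_mul_degree_eq_sum (hf.2.2 t) v
    rw [h, mul_zero] at this
    exact (hf.sum_pos hf0).ne this
  rw [degree_eq_sum_filter] at hdeg
  obtain ⟨e, he, hfe⟩ := exists_ne_zero_of_sum_ne_zero hdeg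
  exact ⟨e, by_contra fun h => hfe (hf.2.1 e h), (mem_filter.1 he).2⟩

lemma IsMatching.mono {H H' M : Finset (∀ t, Fin (b t))} (hM : IsMatching H M) (hH : H ⊆ H') :
    IsMatching H' M :=
  ⟨hM.1.trans hH, hM.2⟩

end Degree

section Caratheodory

variable {n : ℕ} {b : Fin n → ℕ}

def incidence (e : ∀ t, Fin (b t)) : (Σ t, Fin (b t)) → ℝ :=
  fun p => if e p.1 = p.2 then 1 else 0

lemma incidence_injective : Function.Injective (incidence (b := b)) := by
  intro e e' h
  funext t
  have := congrFun h ⟨t, e' t⟩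
  simp only [incidence, if_true] at this
  by_contra hne
  simp [hne] at this

lemma sum_smul_incidence (f : (∀ t, Fin (b t)) → ℝ) :
    ∑ e, f e • incidence e = fun p => degree f p.1 p.2 := by
  funext p
  simp [incidence, degree, Finset.sum_apply]

lemma fracBalanced_of_mem_convexHull {H : Finset (∀ t, Fin (b t))} {x : (Σ t, Fin (b t)) → ℝ}
    (hx : x ∈ convexHull ℝ (incidence '' (H : Set (∀ t, Fin (b t)))))
    (hbal : ∀ t v w, x ⟨t, v⟩ = x ⟨t, w⟩) : FracBalanced H := by
  classical
  rw [← coe_image, mem_convexHull'] at hx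
  obtain ⟨W, hW0, hW1, hWx⟩ := hx
  set g : (∀ t, Fin (b t)) → ℝ := fun e => if e ∈ H then W (incidence e) else 0
  have hsum : ∀ {M : Type} [AddCommGroup M] [Module ℝ M] (F : ((Σ t, Fin (b t)) → ℝ) → M),
      ∑ e, g e • F (incidence e) = ∑ y ∈ H.image incidence, W y • F y := by
    intro M _ _ F
    rw [sum_image incidence_injective.injOn]
    simp [g, ite_smul, sum_ite_mem]
  have hdeg : ∀ t v, degree g t v = x ⟨t, v⟩ := fun t v =>
    congrFun ((sum_smul_incidence g).symm.trans ((hsum id).trans hWx)) ⟨t, v⟩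
  refine ⟨g, ⟨fun e => ?_, fun e he => if_neg he, fun t v w => by rw [hdeg, hdeg, hbal]⟩, ?_⟩
  · by_cases he : e ∈ H
    · simpa [g, he] using hW0 _ (mem_image_of_mem _ he)
    · simp [g, he]
  · intro hg
    have := hsum fun _ => (1 : ℝ)
    simp [hg, hW1] at this

theorem exists_fracBalanced_subset_card_le {H : Finset (∀ t, Fin (b t))} (hH : FracBalanced H) :
    ∃ H₀ ⊆ H, FracBalanced H₀ ∧ #H₀ ≤ ∑ t, b t + 1 := by
  classical
  obtain ⟨f, hf, hf0⟩ := hH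
  have hsumH : ∀ {M : Type} [AddCommGroup M] [Module ℝ M] (F : (∀ t, Fin (b t)) → M),
      ∑ e ∈ H, f e • F e = ∑ e, f e • F e := fun F =>
    sum_subset (subset_univ H) fun e _ he => by simp [hf.2.1 e he]
  have hmass : 0 < ∑ e ∈ H, f e := by
    have := hsumH fun _ => (1 : ℝ)
    simp only [smul_eq_mul, mul_one] at this
    exact this ▸ hf.sum_pos hf0
  have hx := H.centerMass_mem_convexHull (fun e _ => hf.1 e) hmass (z := incidence)
    (s := incidence '' (H : Set _)) fun e he => Set.mem_image_of_mem _ he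
  rw [convexHull_eq_union] at hx
  simp only [Set.mem_iUnion] at hx
  obtain ⟨T, hTH, hT, hxT⟩ := hx
  set H₀ := H.filter (incidence · ∈ T)
  have hH₀ : H₀.image incidence = T := by
    ext y
    simp only [mem_image, mem_filter, H₀]
    constructor
    · rintro ⟨e, ⟨-, he⟩, rfl⟩
      exact he
    · intro hy
      obtain ⟨e, he, rfl⟩ := hTH hy
      exact ⟨e, ⟨he, hy⟩, rfl⟩
  refine ⟨H₀, filter_subset _ _, ?_, ?_⟩
  · refine fracBalanced_of_mem_convexHull (x := H.centerMass f incidence) ?_ fun t v w => ?_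
    · rwa [← coe_image, hH₀]
    · simp only [Finset.centerMass, hsumH, sum_smul_incidence, Pi.smul_apply, hf.2.2 t v w]
  · calc #H₀ = Fintype.card T := by
          rw [Fintype.card_coe, ← hH₀, card_image_of_injective _ incidence_injective]
      _ ≤ Module.finrank ℝ ((Σ t, Fin (b t)) → ℝ) + 1 :=
        hT.card_le_finrank_succ.trans (Nat.add_le_add_right (Submodule.finrank_le _) 1)
      _ = ∑ t, b t + 1 := by simp

end Caratheodory

section Stability

open Filter Topology

variable {d : ℕ} {a : Fin d → ℕ}

noncomputable def imbalance (w : (∀ t, Fin (a t)) → ℝ) : ℝ :=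
  ∑ t, ∑ x, |(a t : ℝ) * degree w t x - ∑ e, w e|

lemma continuous_imbalance : Continuous (imbalance (a := a)) := by
  unfold imbalance
  simp only [degree_eq_sum_filter]
  fun_prop

lemma imbalance_smul {c : ℝ} (hc : 0 ≤ c) (w : (∀ t, Fin (a t)) → ℝ) :
    imbalance (c • w) = c * imbalance w := by
  unfold imbalance
  simp only [degree_smul, Pi.smul_apply, smul_eq_mul, ← mul_sum, mul_left_comm _ c, ← mul_sub,
    abs_mul, abs_of_nonneg hc]

lemma imbalance_pos {S : Finset (∀ t, Fin (a t))} (hS : ¬FracBalanced S)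
    {u : (∀ t, Fin (a t)) → ℝ} (hu : u ∈ stdSimplex ℝ _) (huS : ∀ e ∉ S, u e = 0) :
    0 < imbalance u := by
  refine (sum_nonneg fun t _ => sum_nonneg fun x _ => abs_nonneg _).lt_of_ne fun h => hS ?_
  have hdeg : ∀ t x, (a t : ℝ) * degree u t x = ∑ e, u e := by
    intro t x
    rw [eq_comm, sum_eq_zero_iff_of_nonneg fun t _ => sum_nonneg fun x _ => abs_nonneg _] at h
    have := (sum_eq_zero_iff_of_nonneg fun x _ => abs_nonneg _).1 (h t (mem_univ t)) x (mem_univ x)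
    linarith [abs_eq_zero.1 this]
  refine ⟨u, ⟨hu.1, huS, fun t v w => ?_⟩, fun h0 => by simpa [h0] using hu.2⟩
  have hat : (a t : ℝ) ≠ 0 := Nat.cast_ne_zero.2 v.pos.ne'
  exact mul_left_cancel₀ hat ((hdeg t v).trans (hdeg t w).symm)

theorem exists_pos_fracBalanced_of_imbalance_le :
    ∃ ε > 0, ∀ w : (∀ t, Fin (a t)) → ℝ, (∀ e, 0 ≤ w e) → w ≠ 0 →
      imbalance w ≤ ε * ∑ e, w e → FracBalanced ({e | w e ≠ 0} : Finset _) := by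
  suffices h : ∀ S : Finset (∀ t, Fin (a t)), ∀ᶠ ε in 𝓝[>] 0, ∀ w : (∀ t, Fin (a t)) → ℝ,
      (∀ e, 0 ≤ w e) → w ≠ 0 → ({e | w e ≠ 0} : Finset _) = S →
        imbalance w ≤ ε * ∑ e, w e → FracBalanced S by
    obtain ⟨ε, hε, hε0⟩ := ((eventually_all.2 h).and self_mem_nhdsWithin).exists
    exact ⟨ε, hε0, fun w hw hw0 => hε _ w hw hw0 rfl⟩
  intro S
  by_cases hS : FracBalanced S
  · exact Eventually.of_forall fun _ _ _ _ _ _ => hS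
  set K := stdSimplex ℝ (∀ t, Fin (a t)) ∩ {u | ∀ e ∉ S, u e = 0}
  have hK : IsCompact K := by
    refine (isCompact_stdSimplex _ _).inter_right ?_
    simp only [Set.ofPred_forall]
    exact isClosed_iInter fun e => isClosed_iInter fun _ =>
      isClosed_eq (continuous_apply e) continuous_const
  obtain ⟨δ, hδ, hδK⟩ := hK.exists_forall_le' continuous_imbalance.continuousOn
    fun u hu => imbalance_pos hS hu.1 hu.2
  filter_upwards [nhdsWithin_le_nhds (eventually_lt_nhds hδ)] with ε hεδ w hw hw0 hwS hwε
  have hmass : 0 < ∑ e, w e := Fintype.sum_pos ((Pi.le_def.2 hw).lt_of_ne' hw0)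
  have huK : (∑ e, w e)⁻¹ • w ∈ K := by
    refine ⟨⟨fun e => mul_nonneg (inv_nonneg.2 hmass.le) (hw e), ?_⟩, fun e he => ?_⟩
    · simp only [Pi.smul_apply, smul_eq_mul, ← mul_sum, inv_mul_cancel₀ hmass.ne']
    · have : w e = 0 := by simpa [← hwS] using he
      simp [this]
  have hδw := hδK _ huK
  rw [imbalance_smul (inv_nonneg.2 hmass.le), le_inv_mul_iff₀ hmass] at hδw
  linarith [mul_lt_mul_of_pos_left hεδ hmass]

lemma imbalance_le_of_balanced_add {w r : (∀ t, Fin (a t)) → ℝ} (hr : ∀ e, 0 ≤ r e)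
    (hbal : ∀ t x y, degree (w + r) t x = degree (w + r) t y) :
    imbalance w ≤ (∑ t, (a t : ℝ) ^ 2) * ∑ e, r e := by
  have hterm : ∀ t x, |(a t : ℝ) * degree w t x - ∑ e, w e| ≤ a t * ∑ e, r e := by
    intro t x
    have hwr := card_mul_degree_eq_sum (hbal t) x
    simp only [degree_add, Pi.add_apply, sum_add_distrib] at hwr
    have hat : (1 : ℝ) ≤ a t := by exact_mod_cast x.pos
    have h0 := degree_nonneg hr t x
    have h1 := degree_le_sum hr t x
    rw [abs_le]
    constructor <;> nlinarith
  calc imbalance w ≤ ∑ t, ∑ _x : Fin (a t), (a t : ℝ) * ∑ e, r e :=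
        sum_le_sum fun t _ => sum_le_sum fun x _ => hterm t x
    _ = (∑ t, (a t : ℝ) ^ 2) * ∑ e, r e := by simp [sum_mul, sq, mul_assoc]

end Stability

lemma card_add_card_filter_one_lt_le {α β : Type*} [Fintype β] [DecidableEq β] {s : Finset α}
    {g : α → β} (hs : ∀ y, ∃ x ∈ s, g x = y) :
    Fintype.card β + #{y | 1 < #{x ∈ s | g x = y}} ≤ #s := by
  calc Fintype.card β + #{y | 1 < #{x ∈ s | g x = y}}
      = ∑ y, (1 + if 1 < #{x ∈ s | g x = y} then 1 else 0) := by
        simp [sum_add_distrib, sum_boole]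
    _ ≤ ∑ y, #{x ∈ s | g x = y} := sum_le_sum fun y _ => by
        obtain ⟨x, hx, rfl⟩ := hs y
        have : 0 < #{x' ∈ s | g x' = g x} := card_pos.2 ⟨x, mem_filter.2 ⟨hx, rfl⟩⟩
        split_ifs <;> omega
    _ = #s := (card_eq_sum_card_fiberwise fun x _ => mem_univ (g x)).symm

section Snoc

variable {d : ℕ} {b : Fin (d + 1) → ℕ}

lemma sum_snoc (g : (∀ t, Fin (b t)) → ℝ) :
    ∑ e, g e = ∑ v, ∑ e : ∀ t : Fin d, Fin (b t.castSucc), g (Fin.snoc e v) := by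
  rw [← (Fin.snocEquiv fun t => Fin (b t)).sum_comp, Fintype.sum_prod_type]
  rfl

def marginal (S : Finset (Fin (b (Fin.last d)))) (f : (∀ t, Fin (b t)) → ℝ) :
    (∀ t : Fin d, Fin (b t.castSucc)) → ℝ :=
  fun e => ∑ v ∈ S, f (Fin.snoc e v)

lemma degree_last (f : (∀ t, Fin (b t)) → ℝ) (v : Fin (b (Fin.last d))) :
    degree f (Fin.last d) v = ∑ e : ∀ t : Fin d, Fin (b t.castSucc), f (Fin.snoc e v) := by
  simp [degree, sum_snoc]

lemma degree_marginal_univ (f : (∀ t, Fin (b t)) → ℝ) (t : Fin d) (x : Fin (b t.castSucc)) :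
    degree (marginal univ f) t x = degree f t.castSucc x := by
  rw [degree, degree, sum_snoc, sum_comm]
  refine sum_congr rfl fun e _ => ?_
  simp only [marginal, Fin.snoc_castSucc]
  split_ifs <;> simp

lemma marginal_compl_add_marginal (S : Finset (Fin (b (Fin.last d)))) (f : (∀ t, Fin (b t)) → ℝ) :
    marginal Sᶜ f + marginal S f = marginal univ f :=
  funext fun _ => sum_compl_add_sum S _

lemma IsBalanced.sum_marginal {H : Finset (∀ t, Fin (b t))} {f : (∀ t, Fin (b t)) → ℝ}
    (hf : IsBalanced H f) (S : Finset (Fin (b (Fin.last d)))) :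
    ∑ e, marginal S f e = #S * ((∑ e, f e) / b (Fin.last d)) := by
  simp only [marginal]
  rw [sum_comm, sum_congr rfl fun v _ => ?_, sum_const, nsmul_eq_mul]
  rw [← degree_last, eq_div_iff (Nat.cast_ne_zero.2 v.pos.ne'), mul_comm]
  exact card_mul_degree_eq_sum (hf.2.2 _) v

lemma IsBalanced.imbalance_marginal_compl_le {H : Finset (∀ t, Fin (b t))}
    {f : (∀ t, Fin (b t)) → ℝ} (hf : IsBalanced H f) (S : Finset (Fin (b (Fin.last d)))) :
    imbalance (marginal Sᶜ f) ≤ (∑ t, (Fin.init b t : ℝ) ^ 2) * ∑ e, marginal S f e :=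
  imbalance_le_of_balanced_add (fun e => sum_nonneg fun v _ => hf.1 _) fun t x y => by
    rw [marginal_compl_add_marginal, degree_marginal_univ, degree_marginal_univ]
    exact hf.2.2 _ _ _

lemma IsBalanced.card_filter_one_lt_card_le {H₀ : Finset (∀ t, Fin (b t))}
    {f : (∀ t, Fin (b t)) → ℝ} (hf : IsBalanced H₀ f) (hf0 : f ≠ 0) (hH₀ : #H₀ ≤ ∑ t, b t + 1) :
    #{v : Fin (b (Fin.last d)) | 1 < #{e ∈ H₀ | e (Fin.last d) = v}} ≤ ∑ t, Fin.init b t + 1 := by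
  have := card_add_card_filter_one_lt_le (hf.exists_mem_apply_eq hf0 (Fin.last d))
  rw [Fintype.card_fin] at this
  rw [Fin.sum_univ_castSucc] at hH₀
  simp only [Fin.init]
  omega

lemma IsMatching.image_snoc {H M : Finset (∀ t : Fin d, Fin (b t.castSucc))} (hM : IsMatching H M)
    {φ : (∀ t : Fin d, Fin (b t.castSucc)) → Fin (b (Fin.last d))} (hφ : Set.InjOn φ M)
    {H' : Finset (∀ t, Fin (b t))} (hH' : ∀ e ∈ M, Fin.snoc e (φ e) ∈ H') :
    IsMatching H' (M.image fun e => (Fin.snoc e (φ e) : ∀ t, Fin (b t))) ∧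
      #(M.image fun e => (Fin.snoc e (φ e) : ∀ t, Fin (b t))) = #M := by
  have hinj : Function.Injective fun e : ∀ t : Fin d, Fin (b t.castSucc) =>
      (Fin.snoc e (φ e) : ∀ t, Fin (b t)) :=
    fun e₁ e₂ h => by simpa using congrArg (Fin.init (α := fun t => Fin (b t))) h
  refine ⟨⟨fun _ hx => ?_, ?_⟩, card_image_of_injective _ hinj⟩
  · obtain ⟨e, he, rfl⟩ := mem_image.1 hx
    exact hH' e he
  · simp only [mem_image]
    rintro _ ⟨e₁, he₁, rfl⟩ _ ⟨e₂, he₂, rfl⟩ hne t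
    have hne' : e₁ ≠ e₂ := fun h => hne (h ▸ rfl)
    induction t using Fin.lastCases with
    | last => simpa using mt (hφ he₁ he₂) hne'
    | cast s => simpa using hM.2 e₁ he₁ e₂ he₂ hne' s

lemma exists_isMatching_of_isMatching_marginal {H₀ : Finset (∀ t, Fin (b t))}
    {f : (∀ t, Fin (b t)) → ℝ} (hf : ∀ e ∉ H₀, f e = 0) {S : Finset (Fin (b (Fin.last d)))}
    (hS : ∀ v ∈ S, #{e ∈ H₀ | e (Fin.last d) = v} ≤ 1)
    {M : Finset (∀ t : Fin d, Fin (b t.castSucc))} (hM : IsMatching {e | marginal S f e ≠ 0} M) :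
    ∃ M', IsMatching H₀ M' ∧ #M' = #M := by
  have hlift : ∀ e ∈ M, ∃ v ∈ S, f (Fin.snoc e v) ≠ 0 := fun e he =>
    exists_ne_zero_of_sum_ne_zero (mem_filter.1 (hM.1 he)).2
  rcases M.eq_empty_or_nonempty with rfl | ⟨e₀, he₀⟩
  · exact ⟨∅, ⟨empty_subset _, by simp⟩, rfl⟩
  have : Nonempty (Fin (b (Fin.last d))) := ⟨(hlift e₀ he₀).choose⟩
  choose! φ hφS hφf using hlift
  have hmem : ∀ e ∈ M, (Fin.snoc e (φ e) : ∀ t, Fin (b t)) ∈ H₀ := fun e he =>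
    by_contra fun h => hφf e he (hf _ h)
  have hφ : Set.InjOn φ (M : Set _) := by
    intro e₁ he₁ e₂ he₂ h
    have hsnoc : (Fin.snoc e₁ (φ e₁) : ∀ t, Fin (b t)) = Fin.snoc e₂ (φ e₂) :=
      card_le_one.1 (hS _ (hφS e₁ he₁)) _ (mem_filter.2 ⟨hmem e₁ he₁, by simp⟩) _
        (mem_filter.2 ⟨hmem e₂ he₂, by simp [h]⟩)
    simpa using congrArg (Fin.init (α := fun t => Fin (b t))) hsnoc
  obtain ⟨hM', hcard⟩ := hM.image_snoc hφ hmem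
  exact ⟨_, hM', hcard⟩

end Snoc

theorem exists_isMatching_of_fracBalanced {d m : ℕ} {a : Fin d → ℕ} {b : Fin (d + 1) → ℕ}
    (hab : Fin.init b = a) {ε : ℝ} (hε : 0 < ε)
    (hstab : ∀ w : (∀ t, Fin (a t)) → ℝ, (∀ e, 0 ≤ w e) → w ≠ 0 →
      imbalance w ≤ ε * ∑ e, w e → FracBalanced ({e | w e ≠ 0} : Finset _))
    (hyp : ∀ H : Finset (∀ t, Fin (a t)), FracBalanced H → ∃ M, IsMatching H M ∧ #M = m)
    (hN : ((∑ t, a t + 1 : ℕ) : ℝ) + (∑ t, (a t : ℝ) ^ 2) * (∑ t, a t + 1 : ℕ) / ε <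
      b (Fin.last d))
    {H' : Finset (∀ t, Fin (b t))} (hH' : FracBalanced H') :
    ∃ M, IsMatching H' M ∧ #M = m := by
  subst hab
  obtain ⟨H₀, hH₀H', ⟨f, hf, hf0⟩, hH₀⟩ := exists_fracBalanced_subset_card_le hH'
  set N := b (Fin.last d)
  set K := ∑ t, Fin.init b t + 1
  set C := ∑ t, (Fin.init b t : ℝ) ^ 2
  set J : Finset (Fin N) := {v | 1 < #{e ∈ H₀ | e (Fin.last d) = v}}
  have hJ : (#J : ℝ) ≤ K := by exact_mod_cast hf.card_filter_one_lt_card_le hf0 hH₀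
  have hKN : (K : ℝ) < N := by
    have : 0 ≤ C * K / ε := by positivity
    linarith
  have hJc : (#Jᶜ : ℝ) = N - #J := by
    rw [card_compl, Fintype.card_fin, Nat.cast_sub (by simpa using card_le_univ J)]
  have hkey : C * #J < ε * (N - #J) :=
    calc C * #J ≤ C * K := by gcongr
      _ = ε * (C * K / ε) := by field_simp
      _ < ε * (N - K) := by gcongr; linarith
      _ ≤ ε * (N - #J) := by gcongr
  have hc : 0 < (∑ e, f e) / N := div_pos (hf.sum_pos hf0) (by linarith)
  have hwmass : 0 < ∑ e, marginal Jᶜ f e := by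
    rw [hf.sum_marginal, hJc]
    exact mul_pos (by linarith) hc
  obtain ⟨e, -, he⟩ := exists_ne_zero_of_sum_ne_zero hwmass.ne'
  have hnear : imbalance (marginal Jᶜ f) ≤ ε * ∑ e, marginal Jᶜ f e := by
    refine (hf.imbalance_marginal_compl_le J).trans ?_
    rw [hf.sum_marginal, hf.sum_marginal, hJc, ← mul_assoc, ← mul_assoc]
    exact mul_le_mul_of_nonneg_right hkey.le hc.le
  obtain ⟨M, hM, rfl⟩ := hyp _ (hstab _ (fun e => sum_nonneg fun v _ => hf.1 _)
    (fun h => he (congrFun h e)) hnear)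
  obtain ⟨M', hM', hcard⟩ :=
    exists_isMatching_of_isMatching_marginal hf.2.1 (fun v hv => by simpa [J] using hv) hM
  exact ⟨M', hM'.mono hH₀H', hcard⟩

theorem bm_add_coordinate_general (d m : ℕ) (a : Fin d → ℕ)
    (hyp : ∀ H : Finset (∀ t, Fin (a t)), FracBalanced H →
      ∃ M, IsMatching H M ∧ M.card = m) :
    ∃ N : ℕ, 0 < N ∧
      ∀ H' : Finset (∀ t : Fin (d + 1), Fin (Fin.snoc (α := fun _ => ℕ) a N t)),
        FracBalanced H' → ∃ M, IsMatching H' M ∧ M.card = m := by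
  obtain ⟨ε, hε, hstab⟩ := exists_pos_fracBalanced_of_imbalance_le (a := a)
  obtain ⟨N, hN⟩ := exists_nat_gt
    (((∑ t, a t + 1 : ℕ) : ℝ) + (∑ t, (a t : ℝ) ^ 2) * (∑ t, a t + 1 : ℕ) / ε)
  have hN0 : (0 : ℝ) < N := lt_of_le_of_lt (by positivity) hN
  refine ⟨N, by exact_mod_cast hN0, fun H' hH' => ?_⟩
  exact exists_isMatching_of_fracBalanced (Fin.init_snoc (α := fun _ => ℕ) (p := a) (x := N))
    hε hstab hyp (by rwa [Fin.snoc_last]) hH'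

/-- If every `(a 1, …, a d)`-fractionally balanced `d`-partite hypergraph has a
matching of size `m`, then for some `N` every `(a 1, …, a d, N)`-fractionally
balanced `(d+1)`-partite hypergraph has a matching of size `m`. -/
theorem bm_add_coordinate (d m : ℕ) (hd : 0 < d) (hm : 0 < m)
    (a : Fin d → ℕ) (ha : ∀ t, 0 < a t)
    (hyp : ∀ H : Finset (∀ t, Fin (a t)), FracBalanced H →
      ∃ M, IsMatching H M ∧ M.card = m) :
    ∃ N : ℕ, 0 < N ∧
      ∀ H' : Finset (∀ t : Fin (d + 1), Fin (Fin.snoc (α := fun _ => ℕ) a N t)),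
        FracBalanced H' → ∃ M, IsMatching H' M ∧ M.card = m :=
  bm_add_coordinate_general d m a hyp
end

section
/- Let n ≥ 1 be an integer and r ≥ 1 a real number such that 2r, rn, and 2rn/(2r+1) are all integers. Then for every integer k with 2rn/(2r+1) ≤ k ≤ rn there exists an (n, n, k)-fractionally balanced tripartite hypergraph whose matching number is at most 2rn/(2r+1). -/
/-- `f` is a balanced weight function on the tripartite hypergraph `H`:
nonnegative, vanishing outside `H`, with constant degrees on each of the three sides. -/
def TriBalanced {a b c : ℕ} (H : Finset (Fin a × Fin b × Fin c))
    (f : Fin a × Fin b × Fin c → ℝ) : Prop :=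
  (∀ e, 0 ≤ f e) ∧ (∀ e, e ∉ H → f e = 0) ∧
    (∀ v w : Fin a, (∑ e : Fin a × Fin b × Fin c, if e.1 = v then f e else 0) =
      ∑ e : Fin a × Fin b × Fin c, if e.1 = w then f e else 0) ∧
    (∀ v w : Fin b, (∑ e : Fin a × Fin b × Fin c, if e.2.1 = v then f e else 0) =
      ∑ e : Fin a × Fin b × Fin c, if e.2.1 = w then f e else 0) ∧
    (∀ v w : Fin c, (∑ e : Fin a × Fin b × Fin c, if e.2.2 = v then f e else 0) =
      ∑ e : Fin a × Fin b × Fin c, if e.2.2 = w then f e else 0)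

/-- `H` is an `(a,b,c)`-fractionally balanced tripartite hypergraph. -/
def TriFracBalanced {a b c : ℕ} (H : Finset (Fin a × Fin b × Fin c)) : Prop :=
  ∃ f, TriBalanced H f ∧ f ≠ 0

/-- `M` is a matching in `H`: a set of edges of `H` any two distinct members of
which differ in all three coordinates. -/
def TriMatching {a b c : ℕ} (H M : Finset (Fin a × Fin b × Fin c)) : Prop :=
  M ⊆ H ∧ ∀ e ∈ M, ∀ f ∈ M, e ≠ f → e.1 ≠ f.1 ∧ e.2.1 ≠ f.2.1 ∧ e.2.2 ≠ f.2.2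

/-!
Let `p = 2rn/(2r+1)` and take all edges having two coordinates equal to a common value `i < p`.
Each such `i` is used by at most one edge of a matching, so `ν ≤ p`. Put weight `α` on the edges
`(x,i,i)` and `(i,y,i)` with `x, y ≥ p`, and on `(i,i,z)` weight `β` if `z < p`, `γ` otherwise.
The degrees are constant exactly when `pβ + (k-p)γ + (n-p)α = pα` and `pβ + 2(n-p)α = pγ`,
which `α = pk`, `γ = pn`, `β = pn - 2k(n-p)` solve; `β ≥ 0` amounts to `k ≤ rn`.
-/

open Finset

theorem Fin.sum_sum_eq_sum_range_sum_range {a b : ℕ} (G : ℕ → ℕ → ℝ) :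
    ∑ i : Fin a, ∑ j : Fin b, G i j = ∑ i ∈ range a, ∑ j ∈ range b, G i j := by
  simp only [Fin.sum_univ_eq_sum_range (G _),
    Fin.sum_univ_eq_sum_range (fun i => ∑ j ∈ range b, G i j)]

theorem sum_range_ite_lt {b p : ℕ} (hb : p ≤ b) (f : ℕ → ℝ) :
    ∑ i ∈ range b, (if i < p then f i else 0) = ∑ i ∈ range p, f i := by
  rw [← sum_filter, show {i ∈ range b | i < p} = range p by ext; simp; omega]

theorem sum_range_ite_lt_const {b p : ℕ} (hb : p ≤ b) (u w : ℝ) :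
    ∑ i ∈ range b, (if i < p then u else w) = p * u + (b - p) * w := by
  rw [← sum_range_add_sum_Ico _ hb]
  simp +contextual [sum_ite_of_true, sum_ite_of_false, Nat.cast_sub hb]

section Degrees

variable {a b c : ℕ}

theorem sum_ite_fst_eq_sum_range (F : ℕ → ℕ → ℕ → ℝ) (v : Fin a) :
    (∑ e : Fin a × Fin b × Fin c, if e.1 = v then F e.1 e.2.1 e.2.2 else 0) =
      ∑ y ∈ range b, ∑ z ∈ range c, F v y z := by
  rw [← Fin.sum_sum_eq_sum_range_sum_range]
  simp [Fintype.sum_prod_type]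

theorem sum_ite_snd_eq_sum_range (F : ℕ → ℕ → ℕ → ℝ) (v : Fin b) :
    (∑ e : Fin a × Fin b × Fin c, if e.2.1 = v then F e.1 e.2.1 e.2.2 else 0) =
      ∑ x ∈ range a, ∑ z ∈ range c, F x v z := by
  rw [← Fin.sum_sum_eq_sum_range_sum_range]
  simp [Fintype.sum_prod_type, sum_ite_irrel]

theorem sum_ite_thd_eq_sum_range (F : ℕ → ℕ → ℕ → ℝ) (v : Fin c) :
    (∑ e : Fin a × Fin b × Fin c, if e.2.2 = v then F e.1 e.2.1 e.2.2 else 0) =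
      ∑ x ∈ range a, ∑ y ∈ range b, F x y v := by
  rw [← Fin.sum_sum_eq_sum_range_sum_range]
  simp [Fintype.sum_prod_type]

theorem triBalanced_of_sum_eq {H : Finset (Fin a × Fin b × Fin c)}
    {f : Fin a × Fin b × Fin c → ℝ} (hf : ∀ e, 0 ≤ f e) (hH : ∀ e, e ∉ H → f e = 0)
    {d₁ d₂ d₃ : ℝ} (h₁ : ∀ v, (∑ e : Fin a × Fin b × Fin c, if e.1 = v then f e else 0) = d₁)
    (h₂ : ∀ v, (∑ e : Fin a × Fin b × Fin c, if e.2.1 = v then f e else 0) = d₂)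
    (h₃ : ∀ v, (∑ e : Fin a × Fin b × Fin c, if e.2.2 = v then f e else 0) = d₃) :
    TriBalanced H f :=
  ⟨hf, hH, fun v w => (h₁ v).trans (h₁ w).symm, fun v w => (h₂ v).trans (h₂ w).symm,
    fun v w => (h₃ v).trans (h₃ w).symm⟩

end Degrees

def diagWeight (p : ℕ) (g h : ℕ → ℝ) (x y z : ℕ) : ℝ :=
  (if x < p ∧ x = y then g z else 0) + (if y < p ∧ y = z then h x else 0) +
    (if x < p ∧ x = z then h y else 0)

section DiagWeight

variable {p a b c : ℕ} {g h : ℕ → ℝ}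

theorem diagWeight_nonneg (hg : ∀ z, 0 ≤ g z) (hh : ∀ x, 0 ≤ h x) (x y z : ℕ) :
    0 ≤ diagWeight p g h x y z :=
  add_nonneg (add_nonneg (ite_nonneg (hg z) le_rfl) (ite_nonneg (hh x) le_rfl))
    (ite_nonneg (hh y) le_rfl)

theorem sum_sum_diagWeight_fst (hb : p ≤ b) (hc : p ≤ c) (v : ℕ) :
    ∑ y ∈ range b, ∑ z ∈ range c, diagWeight p g h v y z =
      (if v < p then ∑ z ∈ range c, g z + ∑ y ∈ range b, h y else 0) + p * h v := by
  have hb' : ∀ y, y < p → y < b := fun y hy => hy.trans_le hb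
  have hc' : ∀ z, z < p → z < c := fun z hz => hz.trans_le hc
  simp +contextual [diagWeight, sum_add_distrib, ite_and, hb', hc', sum_range_ite_lt hb]
  split_ifs <;> ring

theorem sum_sum_diagWeight_snd (ha : p ≤ a) (hc : p ≤ c) (v : ℕ) :
    ∑ x ∈ range a, ∑ z ∈ range c, diagWeight p g h x v z =
      (if v < p then ∑ z ∈ range c, g z + ∑ x ∈ range a, h x else 0) + p * h v := by
  have hc' : ∀ z, z < p → z < c := fun z hz => hz.trans_le hc
  simp +contextual [diagWeight, sum_add_distrib, ite_and, hc', sum_range_ite_lt ha]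
  split_ifs <;> ring

theorem sum_sum_diagWeight_thd (ha : p ≤ a) (hb : p ≤ b) (u : ℕ) :
    ∑ x ∈ range a, ∑ y ∈ range b, diagWeight p g h x y u =
      p * g u + (if u < p then ∑ x ∈ range a, h x + ∑ y ∈ range b, h y else 0) := by
  have hb' : ∀ y, y < p → y < b := fun y hy => hy.trans_le hb
  simp +contextual [diagWeight, sum_add_distrib, ite_and, hb', sum_range_ite_lt ha,
    sum_range_ite_lt hb]
  split_ifs <;> ring

end DiagWeight

def diagHypergraph (p a b c : ℕ) : Finset (Fin a × Fin b × Fin c) :=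
  {e | (e.1 : ℕ) < p ∧ (e.1 : ℕ) = e.2.1 ∨ (e.2.1 : ℕ) < p ∧ (e.2.1 : ℕ) = e.2.2 ∨
    (e.1 : ℕ) < p ∧ (e.1 : ℕ) = e.2.2}

theorem TriMatching.card_le_of_diagHypergraph {p a b c : ℕ} {M : Finset (Fin a × Fin b × Fin c)}
    (hM : TriMatching (diagHypergraph p a b c) M) : M.card ≤ p := by
  obtain ⟨hMH, hdisj⟩ := hM
  have hmem : ∀ e ∈ M, (e.1 : ℕ) < p ∧ (e.1 : ℕ) = e.2.1 ∨ (e.2.1 : ℕ) < p ∧ (e.2.1 : ℕ) = e.2.2 ∨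
      (e.1 : ℕ) < p ∧ (e.1 : ℕ) = e.2.2 := fun e he => by
    simpa [diagHypergraph] using hMH he
  -- `owner e` is the value `i < p` that `e` carries in two coordinates; two edges with the same
  -- owner both carry it in two of three positions, hence agree in one of them
  let owner : Fin a × Fin b × Fin c → ℕ := fun e => if (e.1 : ℕ) = e.2.1 then e.1 else e.2.2
  calc M.card ≤ (range p).card := by
        refine card_le_card_of_injOn owner (fun e he => ?_) (fun e he f hf hef => ?_)
        · have := hmem e he
          simp only [coe_range, Set.mem_Iio, owner]
          split_ifs <;> omega
        · by_contra hne
          obtain ⟨h₁, h₂, h₃⟩ := hdisj e he f hf hne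
          rw [Ne, ← Fin.val_inj] at h₁ h₂ h₃
          have := hmem e he
          have := hmem f hf
          simp only [owner] at hef
          split_ifs at hef <;> omega
    _ = p := card_range p

section Balanced

variable {p n k : ℕ} {α β γ : ℝ}

def diagHypergraph.weight (p : ℕ) (α β γ : ℝ) (e : Fin n × Fin n × Fin k) : ℝ :=
  diagWeight p (fun z => if z < p then β else γ) (fun x => if x < p then 0 else α) e.1 e.2.1 e.2.2

theorem diagHypergraph.weight_nonneg (hα : 0 ≤ α) (hβ : 0 ≤ β) (hγ : 0 ≤ γ)
    (e : Fin n × Fin n × Fin k) : 0 ≤ diagHypergraph.weight p α β γ e :=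
  diagWeight_nonneg (fun _ => ite_nonneg hβ hγ) (fun _ => ite_nonneg le_rfl hα) _ _ _

theorem diagHypergraph.weight_eq_zero {e : Fin n × Fin n × Fin k}
    (he : e ∉ diagHypergraph p n n k) : diagHypergraph.weight p α β γ e = 0 := by
  simp only [diagHypergraph, mem_filter, mem_univ, true_and, not_or] at he
  simp [diagHypergraph.weight, diagWeight, he.1, he.2.1, he.2.2]

theorem diagHypergraph.sum_weight_fst (hpn : p ≤ n) (hpk : p ≤ k)
    (hdeg : p * β + (k - p) * γ + (n - p) * α = p * α) (v : Fin n) :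
    (∑ e : Fin n × Fin n × Fin k, if e.1 = v then diagHypergraph.weight p α β γ e else 0) =
      p * α := by
  simp only [diagHypergraph.weight]
  rw [sum_ite_fst_eq_sum_range, sum_sum_diagWeight_fst hpn hpk, sum_range_ite_lt_const hpk,
    sum_range_ite_lt_const hpn]
  split_ifs <;> linarith

theorem diagHypergraph.sum_weight_snd (hpn : p ≤ n) (hpk : p ≤ k)
    (hdeg : p * β + (k - p) * γ + (n - p) * α = p * α) (v : Fin n) :
    (∑ e : Fin n × Fin n × Fin k, if e.2.1 = v then diagHypergraph.weight p α β γ e else 0) =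
      p * α := by
  simp only [diagHypergraph.weight]
  rw [sum_ite_snd_eq_sum_range, sum_sum_diagWeight_snd hpn hpk, sum_range_ite_lt_const hpk,
    sum_range_ite_lt_const hpn]
  split_ifs <;> linarith

theorem diagHypergraph.sum_weight_thd (hpn : p ≤ n)
    (hdeg : p * β + 2 * (n - p) * α = p * γ) (v : Fin k) :
    (∑ e : Fin n × Fin n × Fin k, if e.2.2 = v then diagHypergraph.weight p α β γ e else 0) =
      p * γ := by
  simp only [diagHypergraph.weight]
  rw [sum_ite_thd_eq_sum_range, sum_sum_diagWeight_thd hpn hpn, sum_range_ite_lt_const hpn]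
  split_ifs <;> linarith

theorem diagHypergraph_triFracBalanced (hp : 0 < p) (hpn : p ≤ n) (hpk : p ≤ k)
    (h : 2 * k * (n - p) ≤ p * n) : TriFracBalanced (diagHypergraph p n n k) := by
  set α : ℝ := p * k
  set β : ℝ := p * n - 2 * k * (n - p)
  set γ : ℝ := p * n
  have hβ : 0 ≤ β := by
    rw [← Nat.cast_le (α := ℝ)] at h
    push_cast [Nat.cast_sub hpn] at h
    linarith
  have hdeg₁ : p * β + (k - p) * γ + (n - p) * α = p * α := by ring
  have hdeg₃ : p * β + 2 * (n - p) * α = p * γ := by ring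
  refine ⟨diagHypergraph.weight p α β γ, triBalanced_of_sum_eq
    (diagHypergraph.weight_nonneg (by positivity) hβ (by positivity))
    (fun _ => diagHypergraph.weight_eq_zero) (diagHypergraph.sum_weight_fst hpn hpk hdeg₁)
    (diagHypergraph.sum_weight_snd hpn hpk hdeg₁) (diagHypergraph.sum_weight_thd hpn hdeg₃), ?_⟩
  intro hzero
  have hdeg := diagHypergraph.sum_weight_fst hpn hpk hdeg₁ ⟨0, hp.trans_le hpn⟩
  simp only [hzero, Pi.zero_apply, ite_self, sum_const_zero] at hdeg
  have hk : 0 < k := hp.trans_le hpk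
  have : (0 : ℝ) < p * α := by positivity
  linarith

end Balanced

theorem bm_upper_n_n_k_general (n : ℕ) (hn : 1 ≤ n) (r : ℝ) (hr : 1 ≤ r)
    (c p : ℕ) (hc : (c : ℝ) = r * n)
    (hp : (p : ℝ) = 2 * r * n / (2 * r + 1))
    (k : ℕ) (hpk : p ≤ k) (hkc : k ≤ c) :
    ∃ H : Finset (Fin n × Fin n × Fin k), TriFracBalanced H ∧
      ∀ M, TriMatching H M → M.card ≤ p := by
  have hn' : (1 : ℝ) ≤ n := by exact_mod_cast hn
  have hk : (k : ℝ) ≤ r * n := hc ▸ by exact_mod_cast hkc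
  have hp' : (p : ℝ) * (2 * r + 1) = 2 * r * n := by rw [hp]; field_simp
  have hpn : p ≤ n := by exact_mod_cast (show (p : ℝ) ≤ n by nlinarith)
  have hp0 : 0 < p := by exact_mod_cast (show (0 : ℝ) < p by nlinarith)
  -- `n - p = n / (2r + 1)`, so this is `k ≤ rn`
  have hkey : 2 * k * (n - p) ≤ p * n := by
    rw [← Nat.cast_le (α := ℝ)]
    push_cast [Nat.cast_sub hpn]
    nlinarith
  exact ⟨diagHypergraph p n n k, diagHypergraph_triFracBalanced hp0 hpn hpk hkey,
    fun M hM => hM.card_le_of_diagHypergraph⟩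

/-- For `n ≥ 1` and real `r ≥ 1` such that `2r`, `rn` and `2rn/(2r+1)` are all
integers: for every integer `k` with `2rn/(2r+1) ≤ k ≤ rn` there is an
`(n,n,k)`-fractionally balanced tripartite hypergraph with matching number
at most `2rn/(2r+1)`. -/
theorem bm_upper_n_n_k (n : ℕ) (hn : 1 ≤ n) (r : ℝ) (hr : 1 ≤ r)
    (s c p : ℕ) (hs : (s : ℝ) = 2 * r) (hc : (c : ℝ) = r * n)
    (hp : (p : ℝ) = 2 * r * n / (2 * r + 1))
    (k : ℕ) (hpk : p ≤ k) (hkc : k ≤ c) :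
    ∃ H : Finset (Fin n × Fin n × Fin k), TriFracBalanced H ∧
      ∀ M, TriMatching H M → M.card ≤ p :=
  bm_upper_n_n_k_general n hn r hr c p hc hp k hpk hkc
end

section
/- Let m, d and a_0, a_1,…,a_d, b_0, b_1,…,b_d be positive integers with b_i ≥ a_i for all 0 ≤ i ≤ d. If every cake-division instance with a_0 agents and d cakes, cake t cut into a_t slices, has a placatable set of size m, then every cake-division instance with b_0 agents and d cakes, cake t cut into b_t slices, has a placatable set of size m. -/
/-!
Pull an instance with `b₀` agents and cakes cut into `b t` slices back to one with `a₀` agents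
and `a t` slices: the `i`-th small agent accepts the slice vector `j` at a partition `P` when the
`i`-th large agent accepts the same slices at the partition obtained from `P` by giving the
extra slices length zero. Hungriness survives because a slice of positive length in the padded
partition must be one of the original slices, and a placatable set of the small instance then
maps to one of the same size in the large instance.
-/

/-- The space of partitions of `d` cakes, cake `t` being cut into `a t` slices:
each coordinate lies in the standard simplex. -/
def PartitionSpace (d : ℕ) (a : Fin d → ℕ) : Set (∀ t, Fin (a t) → ℝ) :=
  {P | ∀ t, P t ∈ stdSimplex ℝ (Fin (a t))}

/-- A cake-division instance with `n` agents and `d` cakes, cake `t` cut into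
`a t` slices: for each agent `i` and index vector `j`, a set `A i j ⊆ 𝒫` of
partitions in which agent `i` accepts the `d`-tuple of slices indexed by `j`.
The sets are closed and the hungry-agents condition holds. -/
structure CakeInstance (n d : ℕ) (a : Fin d → ℕ) where
  A : Fin n → (∀ t, Fin (a t)) → Set (∀ t, Fin (a t) → ℝ)
  subset_partitionSpace : ∀ i j, A i j ⊆ PartitionSpace d a
  isClosed : ∀ i j, IsClosed (A i j)
  hungry : ∀ i, ∀ P ∈ PartitionSpace d a, ∃ j : ∀ t, Fin (a t),
    P ∈ A i j ∧ ∀ t, 0 < P t (j t)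

/-- A set `Q` of agents is placatable: there exist a partition `P` and index
vectors, one acceptable at `P` for each agent of `Q`, such that the index
vectors of distinct agents of `Q` differ in every coordinate. -/
def Placatable {n d : ℕ} {a : Fin d → ℕ} (C : CakeInstance n d a)
    (Q : Finset (Fin n)) : Prop :=
  ∃ P ∈ PartitionSpace d a, ∃ φ : Fin n → ∀ t, Fin (a t),
    (∀ q ∈ Q, P ∈ C.A q (φ q)) ∧
    ∀ q ∈ Q, ∀ q' ∈ Q, q ≠ q' → ∀ t, φ q t ≠ φ q' t

open Function

-- For injective `f` this pads `P` with slices of length zero.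
noncomputable def pushPartition {d : ℕ} {a b : Fin d → ℕ} (f : ∀ t, Fin (a t) → Fin (b t))
    (P : ∀ t, Fin (a t) → ℝ) : ∀ t, Fin (b t) → ℝ :=
  fun t => FunOnFinite.linearMap ℝ ℝ (f t) (P t)

section pushPartition

variable {d : ℕ} {a b : Fin d → ℕ} (f : ∀ t, Fin (a t) → Fin (b t))

theorem continuous_pushPartition : Continuous (pushPartition f) :=
  continuous_pi fun t => (LinearMap.continuous_of_finiteDimensional _).comp (continuous_apply t)

theorem pushPartition_mem_partitionSpace {P : ∀ t, Fin (a t) → ℝ}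
    (hP : P ∈ PartitionSpace d a) : pushPartition f P ∈ PartitionSpace d b :=
  fun t => stdSimplex.image_linearMap (f t) ⟨P t, hP t, rfl⟩

theorem exists_pos_of_pushPartition_pos {P : ∀ t, Fin (a t) → ℝ} {t : Fin d} {k : Fin (b t)}
    (h : 0 < pushPartition f P t k) : ∃ j, f t j = k ∧ 0 < P t j := by
  classical
  rw [pushPartition, FunOnFinite.linearMap_apply_apply] at h
  by_contra! hneg
  exact h.not_ge <| Finset.sum_nonpos fun j hj => hneg j (Finset.mem_filter.mp hj).2

end pushPartition

theorem isClosed_partitionSpace (d : ℕ) (a : Fin d → ℕ) : IsClosed (PartitionSpace d a) := by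
  have : PartitionSpace d a = Set.univ.pi fun t => stdSimplex ℝ (Fin (a t)) := by
    ext P
    simp [PartitionSpace]
  rw [this]
  exact isClosed_set_pi fun t _ => isClosed_stdSimplex ℝ (Fin (a t))

namespace CakeInstance

variable {m n d : ℕ} {a b : Fin d → ℕ}

def comap (C : CakeInstance n d b) (e : Fin m → Fin n) (f : ∀ t, Fin (a t) → Fin (b t)) :
    CakeInstance m d a where
  A i j := pushPartition f ⁻¹' C.A (e i) (fun t => f t (j t)) ∩ PartitionSpace d a
  subset_partitionSpace _ _ := Set.inter_subset_right
  isClosed _ _ :=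
    ((C.isClosed _ _).preimage (continuous_pushPartition f)).inter (isClosed_partitionSpace d a)
  hungry i P hP := by
    obtain ⟨k, hk, hpos⟩ := C.hungry (e i) _ (pushPartition_mem_partitionSpace f hP)
    choose j hjk hj using fun t => exists_pos_of_pushPartition_pos f (hpos t)
    have hk_eq : (fun t => f t (j t)) = k := funext hjk
    exact ⟨j, ⟨hk_eq ▸ hk, hP⟩, hj⟩

end CakeInstance

theorem Placatable.of_comap {m n d : ℕ} {a b : Fin d → ℕ} {C : CakeInstance n d b}
    {e : Fin m → Fin n} {f : ∀ t, Fin (a t) → Fin (b t)} (he : Injective e)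
    (hf : ∀ t, Injective (f t)) {Q : Finset (Fin m)} (hQ : Placatable (C.comap e f) Q) :
    Placatable C (Q.map ⟨e, he⟩) := by
  obtain ⟨P, hP, φ, hacc, hdiff⟩ := hQ
  have hP' := pushPartition_mem_partitionSpace f hP
  -- Agents outside the range of `e` are irrelevant; hungriness just supplies index vectors for them.
  choose φ₀ _ using fun i => C.hungry i _ hP'
  refine ⟨pushPartition f P, hP', extend e (fun q t => f t (φ q t)) φ₀, ?_, ?_⟩
  · simp only [Finset.forall_mem_map, Embedding.coeFn_mk, he.extend_apply]
    exact fun q hq => (hacc q hq).1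
  · simp only [Finset.forall_mem_map, Embedding.coeFn_mk, he.extend_apply, he.ne_iff]
    exact fun q hq q' hq' hne t => (hf t).ne (hdiff q hq q' hq' hne t)

theorem ad_monotone_general (m d : ℕ)
    (a₀ b₀ : ℕ) (a b : Fin d → ℕ)
    (h₀ : a₀ ≤ b₀) (hab : ∀ i, a i ≤ b i)
    (hyp : ∀ C : CakeInstance a₀ d a,
      ∃ Q : Finset (Fin a₀), Q.card = m ∧ Placatable C Q) :
    ∀ C : CakeInstance b₀ d b,
      ∃ Q : Finset (Fin b₀), Q.card = m ∧ Placatable C Q := by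
  intro C
  obtain ⟨Q, hQ, hplac⟩ := hyp (C.comap (Fin.castLE h₀) fun t => Fin.castLE (hab t))
  exact ⟨_, by rw [Finset.card_map, hQ],
    hplac.of_comap (Fin.castLE_injective h₀) fun t => Fin.castLE_injective (hab t)⟩

/-- Monotonicity of admissible division: if every cake-division instance with
`a₀` agents and cake sizes `a` has a placatable set of size `m`, then so does
every instance with `b₀ ≥ a₀` agents and cake sizes `b ≥ a` (coordinatewise). -/
theorem ad_monotone (m d : ℕ) (hm : 0 < m) (hd : 0 < d)
    (a₀ b₀ : ℕ) (a b : Fin d → ℕ)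
    (ha₀ : 0 < a₀) (ha : ∀ i, 0 < a i) (hb₀ : 0 < b₀) (hb : ∀ i, 0 < b i)
    (h₀ : a₀ ≤ b₀) (hab : ∀ i, a i ≤ b i)
    (hyp : ∀ C : CakeInstance a₀ d a,
      ∃ Q : Finset (Fin a₀), Q.card = m ∧ Placatable C Q) :
    ∀ C : CakeInstance b₀ d b,
      ∃ Q : Finset (Fin b₀), Q.card = m ∧ Placatable C Q :=
  ad_monotone_general m d a₀ b₀ a b h₀ hab hyp
end
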